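/- Let W, W' be types, N : W → W' → Prop, and γ(X) = {z ∈ W | ∀ y : W', (∀ x ∈ X, N x y) → N z y} for X ⊆ W. Let ⋏ : W → W → Set W be a ternary relation lifted to sets by X ⋏ Y = ⋃ over x ∈ X, y ∈ Y of x ⋏ y, and suppose there exist operations ⇒ : W → W' → Set W' and ⇐ : W' → W → Set W' satisfying the distributive nuclear condition: for all x y : W, z : W', (∀ w ∈ x ⋏ y, N w z) ↔ (∀ u ∈ z ⇐ y, N x u) and (∀ w ∈ x ⋏ y, N w z) ↔ (∀ u ∈ x ⇒ z, N y u); suppose further that for all x, y ∈ W: γ(x ⋏ x) = γ({x}), γ(x ⋏ y) ⊆ γ({x}), and γ(x ⋏ y) = γ(y ⋏ x). Then γ(X ⋏ Y) = γ(X) ∩ γ(Y) for all X, Y ⊆ W. -/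

import Mathlib

/-- The Galois closure operator determined by a relation `N : W → W' → Prop`. -/
def galClose {W W' : Type*} (N : W → W' → Prop) (X : Set W) : Set W :=
  {z | ∀ y : W', (∀ x ∈ X, N x y) → N z y}

/-- Lifting of a ternary relation on `W` to an operation on subsets of `W`. -/
def liftRel {W : Type*} (meet : W → W → Set W) (X Y : Set W) : Set W :=
  ⋃ x ∈ X, ⋃ y ∈ Y, meet x y

/-!
`γ` is the closure `lowerPolar N ∘ upperPolar N` of the Galois connection given by `N`, so the
closure of a set is contained in every extent (lower polar) containing the set. Writing
`⟂u = {w | N w u}`, the nuclear condition says that `{x | x ⋏ y ⊆ ⟂u}` is the extent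
`(u ⇐ y)⟂`, and likewise for the second argument with `x ⇒ u`. Hence if `X ⋏ Y ⊆ ⟂u` and
`z ∈ γ(X) ∩ γ(Y)`, first `z ⋏ Y ⊆ ⟂u`, then `z ⋏ z ⊆ ⟂u`, and idempotence gives `N z u`.
The converse inclusion only uses that `x ⋏ y` lies in both `γ{x}` and `γ{y}`.
-/

open Order Set

section GaloisClosure

variable {W W' : Type*} (N : W → W' → Prop)

theorem subset_galClose (X : Set W) : X ⊆ galClose N X :=
  subset_lowerPolar_upperPolar N X

theorem galClose_mono : Monotone (galClose N) :=
  lowerPolar_upperPolar_monotone N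

variable {N}

theorem galClose_subset_of_isExtent {X S : Set W} (hS : IsExtent N S) (hX : X ⊆ S) :
    galClose N X ⊆ S :=
  hS.lowerPolar_upperPolar_subset hX

theorem galClose_subset_galClose_of_subset {X Y : Set W} (h : X ⊆ galClose N Y) :
    galClose N X ⊆ galClose N Y :=
  galClose_subset_of_isExtent isExtent_lowerPolar h

end GaloisClosure

section LiftRel

variable {W W' : Type*} {N : W → W' → Prop} {meet : W → W → Set W}

theorem liftRel_subset_iff {X Y S : Set W} :
    liftRel meet X Y ⊆ S ↔ ∀ x ∈ X, ∀ y ∈ Y, meet x y ⊆ S := by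
  simp only [liftRel, iUnion_subset_iff]

theorem galClose_liftRel_subset {X Y Z : Set W}
    (h : ∀ x ∈ X, ∀ y ∈ Y, galClose N (meet x y) ⊆ galClose N Z) :
    galClose N (liftRel meet X Y) ⊆ galClose N Z :=
  galClose_subset_galClose_of_subset <| liftRel_subset_iff.2 fun x hx y hy =>
    (subset_galClose N _).trans (h x hx y hy)

theorem isExtent_setOf_meet_subset_left {impl : W' → W → Set W'}
    (himpl : ∀ x y z, (∀ w ∈ meet x y, N w z) ↔ ∀ u ∈ impl z y, N x u) (y : W) (z : W') :
    IsExtent N {x | ∀ w ∈ meet x y, N w z} :=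
  ⟨impl z y, ext fun x => (himpl x y z).symm⟩

theorem isExtent_setOf_meet_subset_right {impr : W → W' → Set W'}
    (himpr : ∀ x y z, (∀ w ∈ meet x y, N w z) ↔ ∀ u ∈ impr x z, N y u) (x : W) (z : W') :
    IsExtent N {y | ∀ w ∈ meet x y, N w z} :=
  ⟨impr x z, ext fun y => (himpr x y z).symm⟩

theorem galClose_inter_subset_galClose_liftRel {impr : W → W' → Set W'}
    {impl : W' → W → Set W'}
    (himpl : ∀ x y z, (∀ w ∈ meet x y, N w z) ↔ ∀ u ∈ impl z y, N x u)
    (himpr : ∀ x y z, (∀ w ∈ meet x y, N w z) ↔ ∀ u ∈ impr x z, N y u)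
    (hidem : ∀ x, galClose N {x} ⊆ galClose N (meet x x)) (X Y : Set W) :
    galClose N X ∩ galClose N Y ⊆ galClose N (liftRel meet X Y) := by
  rintro z ⟨hzX, hzY⟩ u hu
  have hXY : ∀ x ∈ X, ∀ y ∈ Y, ∀ w ∈ meet x y, N w u := fun x hx y hy w hw =>
    hu w (liftRel_subset_iff.1 subset_rfl x hx y hy hw)
  have hzy : ∀ y ∈ Y, ∀ w ∈ meet z y, N w u := fun y hy =>
    galClose_subset_of_isExtent (isExtent_setOf_meet_subset_left himpl y u)
      (fun x hx => hXY x hx y hy) hzX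
  have hzz : ∀ w ∈ meet z z, N w u :=
    galClose_subset_of_isExtent (isExtent_setOf_meet_subset_right himpr z u) hzy hzY
  exact hidem z (subset_galClose N {z} rfl) u hzz

end LiftRel

/-- If the distributive nuclear condition holds, together with idempotence,
decrease and commutativity of `⋏` up to closure, then
`γ(X ⋏ Y) = γ(X) ∩ γ(Y)` for all subsets `X, Y` of `W`. -/
theorem galClose_meet_eq_inter {W W' : Type*} (N : W → W' → Prop)
    (meet : W → W → Set W) (impr : W → W' → Set W') (impl : W' → W → Set W')
    (hnuc : ∀ (x y : W) (z : W'),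
      ((∀ w ∈ meet x y, N w z) ↔ ∀ u ∈ impl z y, N x u) ∧
      ((∀ w ∈ meet x y, N w z) ↔ ∀ u ∈ impr x z, N y u))
    (hidem : ∀ x : W, galClose N (meet x x) = galClose N {x})
    (hle : ∀ x y : W, galClose N (meet x y) ⊆ galClose N {x})
    (hcomm : ∀ x y : W, galClose N (meet x y) = galClose N (meet y x)) :
    ∀ X Y : Set W,
      galClose N (liftRel meet X Y) = galClose N X ∩ galClose N Y := by
  intro X Y
  refine Subset.antisymm (subset_inter ?_ ?_) <|
    galClose_inter_subset_galClose_liftRel (fun x y z => (hnuc x y z).1)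
      (fun x y z => (hnuc x y z).2) (fun x => (hidem x).ge) X Y
  · exact galClose_liftRel_subset fun x hx y _ =>
      (hle x y).trans (galClose_mono N (singleton_subset_iff.2 hx))
  · exact galClose_liftRel_subset fun x _ y hy =>
      (hcomm x y ▸ hle y x).trans (galClose_mono N (singleton_subset_iff.2 hy))
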